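/- Let (y_k)_{k≥1} be i.i.d. random variables taking values in [0,1] with common mean u₀, let c ∈ ℝ, ε > 0 and h > 0 with |c − u₀| < ε. Suppose there exist r⁻ > 0 with E[exp(r⁻·(c − y_1 − ε))] = 1 and r⁺ > 0 with E[exp(r⁺·(y_1 − c − ε))] = 1, and set r = min(r⁻, r⁺). Then the alarm time H of the two-sided CUSUM procedure with reference c satisfies E[H] ≥ exp(r·h)/2; consequently, for any horizon T the expected number of false alarms raised by repeatedly restarting the procedure within T observations is at most 2T/exp(r·h). -/

import Mathlib

/-!
Every alarm is preceded by an index `u` from which one of the two random walks with steps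
`y_i - c - ε` and `c - y_i - ε` climbs by at least `h` (Lindley's representation of the CUSUM
statistics). Since `exp (r⁺ S_n)` and `exp (r⁻ S_n)` are mean-one martingales, Ville's maximal
inequality bounds the probability of such a climb by `exp (-r⁺ h) + exp (-r⁻ h) ≤ 2 exp (-r h)`.
The event "no alarm up to `u`" is independent of "a climb starts at `u`", so
`P(H < ∞) ≤ ∑_u P(H > u) · 2 exp (-r h) = E[H] · 2 exp (-r h)`, which gives `E[H] ≥ exp (r h) / 2`.
For the restarted procedure, distinct alarms before `T` yield distinct climbing indices below `T`,
so the expected number of alarms is at most `T · 2 exp (-r h)`.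
-/

open MeasureTheory ProbabilityTheory
open scoped ENNReal

/-- Upper CUSUM statistic `g_k⁺` with reference `c` and tolerance `ε`, driven by the
observation sequence `x` (where `x k` is the `(k+1)`-st observation `y_{k+1}`). -/
def gPlus (c ε : ℝ) (x : ℕ → ℝ) : ℕ → ℝ
  | 0 => 0
  | k + 1 => max 0 (gPlus c ε x k + (x k - c - ε))

/-- Lower CUSUM statistic `g_k⁻`. -/
def gMinus (c ε : ℝ) (x : ℕ → ℝ) : ℕ → ℝ
  | 0 => 0
  | k + 1 => max 0 (gMinus c ε x k + (c - x k - ε))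

/-- Alarm time `H = inf {k ≥ 1 : g_k⁺ ≥ h or g_k⁻ ≥ h}` of the two-sided CUSUM
procedure, valued in `ℝ≥0∞` (`⊤` if no alarm ever occurs). -/
noncomputable def cusumAlarm (c ε h : ℝ) (x : ℕ → ℝ) : ℝ≥0∞ :=
  sInf ((fun n : ℕ => (n : ℝ≥0∞)) ''
    {k : ℕ | 1 ≤ k ∧ (h ≤ gPlus c ε x k ∨ h ≤ gMinus c ε x k)})

/-- The two-sided CUSUM alarm time, valued in `ℕ∞` (`⊤` if no alarm ever occurs). -/
noncomputable def cusumAlarmENat (c ε h : ℝ) (x : ℕ → ℝ) : ℕ∞ :=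
  sInf ((fun n : ℕ => (n : ℕ∞)) ''
    {k : ℕ | 1 ≤ k ∧ (h ≤ gPlus c ε x k ∨ h ≤ gMinus c ε x k)})

/-- The successive alarm times obtained by repeatedly restarting the two-sided CUSUM
procedure with reference `c` on the observation stream `x`: `τ_0 = 0` and
`τ_{j+1} = τ_j + H(x(τ_j + ·))`, where `H` is the alarm time of a fresh CUSUM run on
the observations following `τ_j` (`⊤` once some run never alarms). -/
noncomputable def cusumRestartTimes (c ε h : ℝ) (x : ℕ → ℝ) : ℕ → ℕ∞
  | 0 => 0
  | j + 1 =>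
      let t := cusumRestartTimes c ε h x j
      if t = ⊤ then ⊤
      else (t.toNat : ℕ∞) + cusumAlarmENat c ε h (fun k => x (t.toNat + k))

/-- The number of alarms raised within the first `T` observations by repeatedly
restarting the two-sided CUSUM procedure (each alarm takes at least one observation,
so at most `T` alarms can occur by time `T`). -/
noncomputable def cusumAlarmCount (c ε h : ℝ) (x : ℕ → ℝ) (T : ℕ) : ℕ :=
  ((Finset.Icc 1 T).filter (fun j => cusumRestartTimes c ε h x j ≤ (T : ℕ∞))).card

open Finset Real

def PartialSumsReach (s : ℕ → ℝ) (a : ℝ) : Prop :=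
  ∃ n, a ≤ ∑ i ∈ range n, s i

def IsFirstPassage (s : ℕ → ℝ) (a : ℝ) (n : ℕ) : Prop :=
  a ≤ ∑ i ∈ range n, s i ∧ ∀ j < n, ∑ i ∈ range j, s i < a

theorem partialSumsReach_iff_exists_isFirstPassage {s : ℕ → ℝ} {a : ℝ} :
    PartialSumsReach s a ↔ ∃ n, IsFirstPassage s a n := by
  classical
  refine ⟨fun h => ⟨Nat.find h, Nat.find_spec h, fun j hj => not_le.mp (Nat.find_min h hj)⟩,
    fun ⟨n, hn, _⟩ => ⟨n, hn⟩⟩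

theorem IsFirstPassage.eq {s : ℕ → ℝ} {a : ℝ} {m n : ℕ} (hm : IsFirstPassage s a m)
    (hn : IsFirstPassage s a n) : m = n := by
  by_contra hne
  rcases lt_or_gt_of_ne hne with hlt | hlt
  · exact (hn.2 m hlt).not_ge hm.1
  · exact (hm.2 n hlt).not_ge hn.1

def CrossesFrom (c ε h : ℝ) (x : ℕ → ℝ) (u : ℕ) : Prop :=
  PartialSumsReach (fun i => x (u + i) - c - ε) h ∨ PartialSumsReach (fun i => c - x (u + i) - ε) h

section Deterministic

variable {c ε h : ℝ} {x : ℕ → ℝ}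

theorem gMinus_eq_gPlus_neg (c ε : ℝ) (x : ℕ → ℝ) : gMinus c ε x = gPlus (-c) ε (-x) := by
  funext k
  induction k with
  | zero => rfl
  | succ k ih => simp only [gMinus, gPlus, ih, Pi.neg_apply, neg_sub_neg]

theorem exists_gPlus_eq_sum_Ico (c ε : ℝ) (x : ℕ → ℝ) (k : ℕ) :
    ∃ j ≤ k, gPlus c ε x k = ∑ i ∈ Ico j k, (x i - c - ε) := by
  induction k with
  | zero => exact ⟨0, le_rfl, rfl⟩
  | succ k ih =>
    obtain ⟨j, hjk, hj⟩ := ih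
    rcases le_total (gPlus c ε x k + (x k - c - ε)) 0 with hneg | hpos
    · exact ⟨k + 1, le_rfl, by simp [gPlus, hneg]⟩
    · refine ⟨j, hjk.trans k.le_succ, ?_⟩
      rw [gPlus, max_eq_right hpos, sum_Ico_succ_top hjk, hj]

theorem exists_gMinus_eq_sum_Ico (c ε : ℝ) (x : ℕ → ℝ) (k : ℕ) :
    ∃ j ≤ k, gMinus c ε x k = ∑ i ∈ Ico j k, (c - x i - ε) := by
  obtain ⟨j, hjk, hj⟩ := exists_gPlus_eq_sum_Ico (-c) ε (-x) k
  refine ⟨j, hjk, ?_⟩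
  simp only [gMinus_eq_gPlus_neg, hj, Pi.neg_apply, neg_sub_neg]

theorem exists_crossesFrom_of_alarm (hh : 0 < h) {k : ℕ}
    (halarm : h ≤ gPlus c ε x k ∨ h ≤ gMinus c ε x k) : ∃ j < k, CrossesFrom c ε h x j := by
  have reach_of_sum : ∀ s : ℕ → ℝ, ∀ j ≤ k, h ≤ ∑ i ∈ Ico j k, s i →
      j < k ∧ PartialSumsReach (fun i => s (j + i)) h := by
    intro s j hjk hs
    refine ⟨lt_of_le_of_ne hjk ?_, k - j, by rwa [← sum_Ico_eq_sum_range]⟩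
    rintro rfl
    rw [Ico_self, sum_empty] at hs
    linarith
  rcases halarm with hp | hm
  · obtain ⟨j, hjk, hj⟩ := exists_gPlus_eq_sum_Ico c ε x k
    obtain ⟨hlt, hreach⟩ := reach_of_sum (fun i => x i - c - ε) j hjk (hj ▸ hp)
    exact ⟨j, hlt, Or.inl hreach⟩
  · obtain ⟨j, hjk, hj⟩ := exists_gMinus_eq_sum_Ico c ε x k
    obtain ⟨hlt, hreach⟩ := reach_of_sum (fun i => c - x i - ε) j hjk (hj ▸ hm)
    exact ⟨j, hlt, Or.inr hreach⟩

theorem lt_cusumAlarmENat_iff (u : ℕ) :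
    (u : ℕ∞) < cusumAlarmENat c ε h x ↔
      ∀ k, 1 ≤ k → k ≤ u → gPlus c ε x k < h ∧ gMinus c ε x k < h := by
  rw [cusumAlarmENat, ← ENat.add_one_le_iff (ENat.natCast_ne_top u), le_sInf_iff]
  simp only [Set.forall_mem_image]
  refine forall_congr' fun k => ?_
  norm_cast
  grind

theorem exists_crossesFrom_lt_cusumAlarmENat (hh : 0 < h) (hH : cusumAlarmENat c ε h x ≠ ⊤) :
    ∃ u : ℕ, (u : ℕ∞) < cusumAlarmENat c ε h x ∧ CrossesFrom c ε h x u := by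
  set S := {k | 1 ≤ k ∧ (h ≤ gPlus c ε x k ∨ h ≤ gMinus c ε x k)}
  have hS : S.Nonempty := by
    by_contra hS
    simp [cusumAlarmENat, Set.not_nonempty_iff_eq_empty.mp hS, S] at hH
  obtain ⟨j, hj, hcross⟩ := exists_crossesFrom_of_alarm hh (Nat.sInf_mem hS).2
  refine ⟨j, (lt_cusumAlarmENat_iff j).2 fun k hk1 hkj => ?_, hcross⟩
  by_contra hk
  have := Nat.sInf_le (s := S) ⟨hk1, by grind⟩
  omega

theorem cusumAlarm_eq_toENNReal (c ε h : ℝ) (x : ℕ → ℝ) :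
    cusumAlarm c ε h x = (cusumAlarmENat c ε h x : ℝ≥0∞) := by
  simp [cusumAlarm, cusumAlarmENat, sInf_image]

end Deterministic

section Restart

variable {c ε h : ℝ} {x : ℕ → ℝ}

theorem cusumRestartTimes_succ_of_ne_top {j : ℕ} (hj : cusumRestartTimes c ε h x j ≠ ⊤) :
    cusumRestartTimes c ε h x (j + 1) = cusumRestartTimes c ε h x j +
      cusumAlarmENat c ε h (fun k => x ((cusumRestartTimes c ε h x j).toNat + k)) := by
  rw [cusumRestartTimes, if_neg hj, ENat.natCast_toNat hj]

theorem monotone_cusumRestartTimes : Monotone (cusumRestartTimes c ε h x) := by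
  refine monotone_nat_of_le_succ fun j => ?_
  by_cases hj : cusumRestartTimes c ε h x j = ⊤
  · simp [cusumRestartTimes, hj]
  · exact (cusumRestartTimes_succ_of_ne_top hj).symm ▸ le_self_add

theorem exists_crossesFrom_restart (hh : 0 < h) {j : ℕ}
    (hfin : cusumRestartTimes c ε h x (j + 1) ≠ ⊤) :
    ∃ u : ℕ, cusumRestartTimes c ε h x j ≤ u ∧ (u : ℕ∞) < cusumRestartTimes c ε h x (j + 1) ∧
      CrossesFrom c ε h x u := by
  have hj : cusumRestartTimes c ε h x j ≠ ⊤ := fun hj => hfin (by simp [cusumRestartTimes, hj])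
  set t := (cusumRestartTimes c ε h x j).toNat
  have ht : cusumRestartTimes c ε h x j = t := (ENat.natCast_toNat hj).symm
  rw [cusumRestartTimes_succ_of_ne_top hj, ht] at hfin ⊢
  obtain ⟨a, ha, hcross⟩ := exists_crossesFrom_lt_cusumAlarmENat hh (WithTop.add_ne_top.mp hfin).2
  refine ⟨t + a, by simp, ?_,
    by simpa only [CrossesFrom, add_assoc, ENat.toNat_natCast] using hcross⟩
  rwa [Nat.cast_add, ENat.add_lt_add_iff_left (ENat.natCast_ne_top t)]

open Classical in
/-- Each finished run contains an index from which one of the walks crosses `h`; the runs are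
disjoint, so distinct alarms get distinct indices. -/
theorem cusumAlarmCount_le_card_crossesFrom (hh : 0 < h) (T : ℕ) :
    cusumAlarmCount c ε h x T ≤ #{u ∈ range T | CrossesFrom c ε h x u} := by
  set τ := cusumRestartTimes c ε h x
  set A := (Icc 1 T).filter fun j => τ j ≤ (T : ℕ∞)
  have hwit : ∀ j ∈ A, ∃ u : ℕ, τ (j - 1) ≤ u ∧ (u : ℕ∞) < τ j ∧ CrossesFrom c ε h x u := by
    intro j hj
    simp only [A, mem_filter, mem_Icc] at hj
    obtain ⟨j, rfl⟩ : ∃ j', j = j' + 1 := ⟨j - 1, by omega⟩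
    exact exists_crossesFrom_restart hh (ne_top_of_le_ne_top (ENat.natCast_ne_top T) hj.2)
  choose! f hf using hwit
  have hmono : StrictMonoOn f A := by
    intro j₁ hj₁ j₂ hj₂ hlt
    have : (f j₁ : ℕ∞) < f j₂ := calc
      (f j₁ : ℕ∞) < τ j₁ := (hf j₁ hj₁).2.1
      _ ≤ τ (j₂ - 1) := monotone_cusumRestartTimes (by omega)
      _ ≤ f j₂ := (hf j₂ hj₂).1
    exact_mod_cast this
  refine card_le_card_of_injOn f (fun j hj => ?_) hmono.injOn
  have hjT : (f j : ℕ∞) < T := (hf j hj).2.1.trans_le (mem_filter.mp hj).2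
  simp only [coe_filter, mem_range]
  exact ⟨by exact_mod_cast hjT, (hf j hj).2.2⟩

end Restart

section BlockSigma

variable {Ω ι β : Type*} [mβ : MeasurableSpace β] {X : ι → Ω → β}

abbrev blockSigma (X : ι → Ω → β) (s : Set ι) : MeasurableSpace Ω :=
  ⨆ i ∈ s, MeasurableSpace.comap (X i) mβ

theorem blockSigma_le [MeasurableSpace Ω] (hX : ∀ i, Measurable (X i)) (s : Set ι) :
    blockSigma X s ≤ ‹MeasurableSpace Ω› :=
  iSup₂_le fun i _ => (hX i).comap_le

theorem measurable_blockSigma {s : Set ι} {i : ι} (hi : i ∈ s) :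
    Measurable[blockSigma X s] (X i) :=
  Measurable.of_comap_le (le_iSup₂ (f := fun i (_ : i ∈ s) => MeasurableSpace.comap (X i) mβ) i hi)

theorem indep_blockSigma [MeasurableSpace Ω] {μ : Measure Ω} (hX : ∀ i, Measurable (X i))
    (hind : iIndepFun X μ) {s t : Set ι} (hst : Disjoint s t) :
    Indep (blockSigma X s) (blockSigma X t) μ :=
  indep_iSup_of_disjoint (fun i => (hX i).comap_le) hind hst

end BlockSigma

section Maximal

variable {Ω ι : Type*} {ρ : ℝ}

theorem measurable_ofReal_exp_mul_sum {m : MeasurableSpace Ω} {X : ι → Ω → ℝ} {s : Finset ι}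
    (hX : ∀ i ∈ s, Measurable[m] (X i)) :
    Measurable[m] fun ω => ENNReal.ofReal (exp (ρ * ∑ i ∈ s, X i ω)) :=
  ENNReal.measurable_ofReal.comp (measurable_exp.comp ((Finset.measurable_sum s hX).const_mul ρ))

theorem measurableSet_isFirstPassage {X : ℕ → Ω → ℝ} (a : ℝ) (n : ℕ) :
    MeasurableSet[blockSigma X (Set.Iio n)] {ω | IsFirstPassage (fun i => X i ω) a n} := by
  have hS : ∀ j ≤ n, Measurable[blockSigma X (Set.Iio n)] fun ω => ∑ i ∈ range j, X i ω :=
    fun j hj => Finset.measurable_sum _ fun i hi =>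
      measurable_blockSigma (Set.mem_Iio.mpr ((mem_range.mp hi).trans_le hj))
  simp only [IsFirstPassage, Set.ofPred_and, Set.ofPred_forall]
  exact (measurableSet_le measurable_const (hS n le_rfl)).inter
    (.iInter fun j => .iInter fun hj => measurableSet_lt (hS j hj.le) measurable_const)

variable [MeasurableSpace Ω] {μ : Measure Ω}

theorem lintegral_ofReal_exp_mul_sum {X : ι → Ω → ℝ} (hX : ∀ i, Measurable (X i))
    (hind : iIndepFun X μ) (hmgf : ∀ i, ∫⁻ ω, ENNReal.ofReal (exp (ρ * X i ω)) ∂μ = 1)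
    (s : Finset ι) : ∫⁻ ω, ENNReal.ofReal (exp (ρ * ∑ i ∈ s, X i ω)) ∂μ = 1 := by
  have hprod : ∀ ω, ENNReal.ofReal (exp (ρ * ∑ i ∈ s, X i ω)) =
      ∏ i ∈ s, ENNReal.ofReal (exp (ρ * X i ω)) := fun ω => by
    rw [mul_sum, exp_sum, ENNReal.ofReal_prod_of_nonneg fun i _ => (exp_pos _).le]
  simp_rw [hprod]
  rw [lintegral_prod_eq_prod_lintegral_of_indepFun s (fun i ω => ENNReal.ofReal (exp (ρ * X i ω)))
    (hind.comp (fun _ t => ENNReal.ofReal (exp (ρ * t))) fun _ => by fun_prop)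
    fun i => by fun_prop]
  simp [hmgf]

variable {X : ℕ → Ω → ℝ}

/-- The martingale property of `exp (ρ S_n)`: the factor `exp (ρ (S_n - S_m))` is independent of
the first `m` steps and has mean one. -/
theorem setLIntegral_ofReal_exp_mul_sum_range_of_le (hX : ∀ i, Measurable (X i))
    (hind : iIndepFun X μ) (hmgf : ∀ i, ∫⁻ ω, ENNReal.ofReal (exp (ρ * X i ω)) ∂μ = 1)
    {m n : ℕ} (hmn : m ≤ n) {A : Set Ω} (hA : MeasurableSet[blockSigma X (Set.Iio m)] A) :
    ∫⁻ ω in A, ENNReal.ofReal (exp (ρ * ∑ i ∈ range n, X i ω)) ∂μ =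
      ∫⁻ ω in A, ENNReal.ofReal (exp (ρ * ∑ i ∈ range m, X i ω)) ∂μ := by
  have hsplit : ∀ ω, ENNReal.ofReal (exp (ρ * ∑ i ∈ range n, X i ω)) =
      ENNReal.ofReal (exp (ρ * ∑ i ∈ range m, X i ω)) *
        ENNReal.ofReal (exp (ρ * ∑ i ∈ Ico m n, X i ω)) := fun ω => by
    rw [← sum_range_add_sum_Ico _ hmn, mul_add, exp_add, ENNReal.ofReal_mul (exp_pos _).le]
  have hA' := blockSigma_le hX _ _ hA
  simp_rw [hsplit]
  rw [← lintegral_indicator hA', ← lintegral_indicator hA']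
  simp_rw [Set.indicator_mul_left]
  rw [lintegral_mul_eq_lintegral_mul_lintegral_of_independent_measurableSpace
    (blockSigma_le hX _) (blockSigma_le hX (Set.Ico m n))
    (indep_blockSigma hX hind ((Set.Iio_disjoint_Ici le_rfl).mono_right Set.Ico_subset_Ici_self))
    ((measurable_ofReal_exp_mul_sum fun i hi =>
      measurable_blockSigma (Set.mem_Iio.mpr (mem_range.mp hi))).indicator hA)
    (measurable_ofReal_exp_mul_sum fun i hi => measurable_blockSigma (by simpa using hi)),
    lintegral_ofReal_exp_mul_sum hX hind hmgf, mul_one]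

/-- Ville's maximal inequality for the exponential martingale `exp (ρ S_n)`, proved by
decomposing according to the first passage time above `a`. -/
theorem measure_partialSumsReach_le (hX : ∀ i, Measurable (X i)) (hind : iIndepFun X μ)
    (hρ : 0 ≤ ρ) (hmgf : ∀ i, ∫⁻ ω, ENNReal.ofReal (exp (ρ * X i ω)) ∂μ = 1) (a : ℝ) :
    μ {ω | PartialSumsReach (fun i => X i ω) a} ≤ ENNReal.ofReal (exp (-(ρ * a))) := by
  set A : ℕ → Set Ω := fun n => {ω | IsFirstPassage (fun i => X i ω) a n}
  have hA : ∀ n, MeasurableSet (A n) := fun n =>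
    blockSigma_le hX _ _ (measurableSet_isFirstPassage a n)
  have hdisj : Pairwise (Function.onFun Disjoint A) := fun m n hmn =>
    Set.disjoint_left.mpr fun ω hm hn => hmn (IsFirstPassage.eq hm hn)
  have hbound : ∀ N, ENNReal.ofReal (exp (ρ * a)) * ∑ n ∈ range N, μ (A n) ≤ 1 := by
    intro N
    calc ENNReal.ofReal (exp (ρ * a)) * ∑ n ∈ range N, μ (A n)
        = ∑ n ∈ range N, ∫⁻ _ in A n, ENNReal.ofReal (exp (ρ * a)) ∂μ := by
          simp only [mul_sum, setLIntegral_const]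
      _ ≤ ∑ n ∈ range N, ∫⁻ ω in A n, ENNReal.ofReal (exp (ρ * ∑ i ∈ range n, X i ω)) ∂μ :=
          sum_le_sum fun n _ => setLIntegral_mono (measurable_ofReal_exp_mul_sum fun i _ => hX i)
            fun ω hω => ENNReal.ofReal_le_ofReal (exp_le_exp.mpr (by nlinarith [hω.1]))
      _ = ∑ n ∈ range N, ∫⁻ ω in A n, ENNReal.ofReal (exp (ρ * ∑ i ∈ range N, X i ω)) ∂μ :=
          sum_congr rfl fun n hn => (setLIntegral_ofReal_exp_mul_sum_range_of_le hX hind hmgf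
            (mem_range.mp hn).le (measurableSet_isFirstPassage a n)).symm
      _ = ∫⁻ ω in ⋃ n ∈ range N, A n, ENNReal.ofReal (exp (ρ * ∑ i ∈ range N, X i ω)) ∂μ :=
          (lintegral_biUnion_finset (hdisj.set_pairwise _) (fun n _ => hA n) _).symm
      _ ≤ ∫⁻ ω, ENNReal.ofReal (exp (ρ * ∑ i ∈ range N, X i ω)) ∂μ := setLIntegral_le_lintegral _ _
      _ = 1 := lintegral_ofReal_exp_mul_sum hX hind hmgf _
  have hunion : {ω | PartialSumsReach (fun i => X i ω) a} = ⋃ n, A n := by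
    ext ω
    simp only [Set.mem_iUnion, Set.mem_ofPred_eq, A, partialSumsReach_iff_exists_isFirstPassage]
  rw [hunion, measure_iUnion hdisj hA]
  refine ENNReal.tsum_le_of_sum_range_le fun N => ?_
  rw [exp_neg, ENNReal.ofReal_inv_of_pos (exp_pos _), ENNReal.le_inv_iff_mul_le, mul_comm]
  exact hbound N

end Maximal

section LayerCake

variable {Ω : Type*} [MeasurableSpace Ω] {μ : Measure Ω}

theorem lintegral_toENNReal_eq_tsum {f : Ω → ℕ∞}
    (hf : ∀ u : ℕ, MeasurableSet {ω | (u : ℕ∞) < f ω}) :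
    ∫⁻ ω, (f ω : ℝ≥0∞) ∂μ = ∑' u : ℕ, μ {ω | (u : ℕ∞) < f ω} := by
  have hpt : ∀ ω, (f ω : ℝ≥0∞) = ∑' u : ℕ, {ω | (u : ℕ∞) < f ω}.indicator 1 ω := by
    intro ω
    simp only [Set.indicator_apply, Set.mem_ofPred_eq, Pi.one_apply]
    induction f ω using ENat.recTopCoe with
    | top => simp
    | coe n =>
      rw [tsum_eq_sum (s := range n) fun u hu => by simpa using hu]
      simp [filter_true_of_mem fun u hu => mem_range.mp hu]
  simp_rw [hpt]
  rw [lintegral_tsum fun u => (measurable_one.indicator (hf u)).aemeasurable]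
  simp [lintegral_indicator_one (hf _)]

/-- The sum is `E[f]`. Either `f = ⊤` with positive probability and the sum is infinite, or `f` is
a.s. finite and the hypothesis reads `1 ≤ E[f] q`. -/
theorem inv_le_tsum_measure_lt [IsProbabilityMeasure μ] {f : Ω → ℕ∞}
    (hf : ∀ u : ℕ, MeasurableSet {ω | (u : ℕ∞) < f ω}) {q : ℝ≥0∞}
    (hq : μ {ω | f ω ≠ ⊤} ≤ (∑' u : ℕ, μ {ω | (u : ℕ∞) < f ω}) * q) :
    q⁻¹ ≤ ∑' u : ℕ, μ {ω | (u : ℕ∞) < f ω} := by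
  have htop_eq : {ω | f ω = ⊤} = ⋂ u : ℕ, {ω | (u : ℕ∞) < f ω} := by
    ext ω
    simp [ENat.eq_top_iff_forall_gt]
  by_cases htop : μ {ω | f ω = ⊤} = 0
  · have hfin : μ {ω | f ω ≠ ⊤} = 1 := by
      rw [← Set.compl_ofPred, prob_compl_eq_one_iff (htop_eq ▸ .iInter hf)]
      exact htop
    calc q⁻¹ = q⁻¹ * 1 := (mul_one _).symm
      _ ≤ q⁻¹ * ((∑' u : ℕ, μ {ω | (u : ℕ∞) < f ω}) * q) := by gcongr; exact hfin ▸ hq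
      _ ≤ ∑' u : ℕ, μ {ω | (u : ℕ∞) < f ω} := by
          rw [mul_comm, mul_assoc]
          exact mul_le_of_le_one_right' (ENNReal.mul_inv_le_one q)
  · calc q⁻¹ ≤ ∑' _ : ℕ, μ {ω | f ω = ⊤} := by
          rw [ENNReal.tsum_const_eq_top_of_ne_zero htop]
          exact le_top
      _ ≤ _ := ENNReal.tsum_le_tsum fun u => measure_mono fun ω hω => by
          simp_all [Set.mem_ofPred_eq]

end LayerCake

section CusumProbability

variable {Ω : Type*} {y : ℕ → Ω → ℝ} {c ε h : ℝ}

theorem measurable_gPlus {m : MeasurableSpace Ω} {x : ℕ → Ω → ℝ} {k : ℕ}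
    (hx : ∀ i < k, Measurable[m] (x i)) : Measurable[m] fun ω => gPlus c ε (fun i => x i ω) k := by
  induction k with
  | zero => exact measurable_const
  | succ k ih =>
    exact measurable_const.max ((ih fun i hi => hx i (by omega)).add
      (((hx k k.lt_succ_self).sub_const c).sub_const ε))

theorem measurable_gMinus {m : MeasurableSpace Ω} {x : ℕ → Ω → ℝ} {k : ℕ}
    (hx : ∀ i < k, Measurable[m] (x i)) : Measurable[m] fun ω => gMinus c ε (fun i => x i ω) k := by
  simp_rw [gMinus_eq_gPlus_neg]
  exact measurable_gPlus fun i hi => (hx i hi).neg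

theorem measurableSet_partialSumsReach {m : MeasurableSpace Ω} {X : ℕ → Ω → ℝ}
    (hX : ∀ i, Measurable[m] (X i)) (a : ℝ) :
    MeasurableSet[m] {ω | PartialSumsReach (fun i => X i ω) a} := by
  simp only [PartialSumsReach, Set.ofPred_exists]
  exact .iUnion fun n => measurableSet_le measurable_const (Finset.measurable_sum _ fun i _ => hX i)

theorem measurableSet_lt_cusumAlarmENat (u : ℕ) :
    MeasurableSet[blockSigma y (Set.Iio u)]
      {ω | (u : ℕ∞) < cusumAlarmENat c ε h fun i => y i ω} := by
  have hy : ∀ k ≤ u, ∀ i < k, Measurable[blockSigma y (Set.Iio u)] (y i) :=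
    fun k hk i hi => measurable_blockSigma (Set.mem_Iio.mpr (by omega))
  simp only [lt_cusumAlarmENat_iff, Set.ofPred_forall, Set.ofPred_and]
  exact .iInter fun k => .iInter fun _ => .iInter fun hk =>
    (measurableSet_lt (measurable_gPlus (hy k hk)) measurable_const).inter
      (measurableSet_lt (measurable_gMinus (hy k hk)) measurable_const)

theorem measurableSet_crossesFrom (u : ℕ) :
    MeasurableSet[blockSigma y (Set.Ici u)] {ω | CrossesFrom c ε h (fun i => y i ω) u} := by
  have hy : ∀ i, Measurable[blockSigma y (Set.Ici u)] (y (u + i)) :=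
    fun i => measurable_blockSigma (by simp)
  simp only [CrossesFrom, Set.ofPred_or]
  exact (measurableSet_partialSumsReach (fun i => ((hy i).sub_const c).sub_const ε) h).union
    (measurableSet_partialSumsReach (fun i => (measurable_const.sub (hy i)).sub_const ε) h)

variable [MeasurableSpace Ω] {μ : Measure Ω}

theorem measure_crossesFrom_le (hy : ∀ i, Measurable (y i)) (hind : iIndepFun y μ)
    {rp rm : ℝ} (hrp : 0 ≤ rp) (hrm : 0 ≤ rm)
    (hrootp : ∀ i, ∫⁻ ω, ENNReal.ofReal (exp (rp * (y i ω - c - ε))) ∂μ = 1)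
    (hrootm : ∀ i, ∫⁻ ω, ENNReal.ofReal (exp (rm * (c - y i ω - ε))) ∂μ = 1) (u : ℕ) :
    μ {ω | CrossesFrom c ε h (fun i => y i ω) u} ≤
      ENNReal.ofReal (exp (-(rp * h))) + ENNReal.ofReal (exp (-(rm * h))) := by
  have hshift := hind.precomp (add_right_injective u)
  refine (measure_union_le _ _).trans (add_le_add ?_ ?_)
  · exact measure_partialSumsReach_le (fun i => ((hy (u + i)).sub_const c).sub_const ε)
      (hshift.comp (fun _ t => t - c - ε) fun _ => by fun_prop) hrp (fun i => hrootp (u + i)) h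
  · exact measure_partialSumsReach_le (fun i => (measurable_const.sub (hy (u + i))).sub_const ε)
      (hshift.comp (fun _ t => c - t - ε) fun _ => by fun_prop) hrm (fun i => hrootm (u + i)) h

/-- An alarm is preceded by a crossing index `u` with no alarm up to `u`; the two events depend on
disjoint blocks of observations, so they are independent. -/
theorem measure_cusumAlarmENat_ne_top_le (hy : ∀ i, Measurable (y i)) (hind : iIndepFun y μ)
    (hh : 0 < h) {q : ℝ≥0∞} (hq : ∀ u, μ {ω | CrossesFrom c ε h (fun i => y i ω) u} ≤ q) :
    μ {ω | cusumAlarmENat c ε h (fun i => y i ω) ≠ ⊤} ≤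
      (∑' u : ℕ, μ {ω | (u : ℕ∞) < cusumAlarmENat c ε h fun i => y i ω}) * q := by
  calc μ {ω | cusumAlarmENat c ε h (fun i => y i ω) ≠ ⊤}
      ≤ μ (⋃ u : ℕ, {ω | (u : ℕ∞) < cusumAlarmENat c ε h fun i => y i ω} ∩
          {ω | CrossesFrom c ε h (fun i => y i ω) u}) :=
        measure_mono fun ω hω => Set.mem_iUnion.mpr (exists_crossesFrom_lt_cusumAlarmENat hh hω)
    _ ≤ ∑' u : ℕ, μ ({ω | (u : ℕ∞) < cusumAlarmENat c ε h fun i => y i ω} ∩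
          {ω | CrossesFrom c ε h (fun i => y i ω) u}) := measure_iUnion_le _
    _ = ∑' u : ℕ, μ {ω | (u : ℕ∞) < cusumAlarmENat c ε h fun i => y i ω} *
          μ {ω | CrossesFrom c ε h (fun i => y i ω) u} :=
        tsum_congr fun u => (Indep_iff _ _ _).mp
          (indep_blockSigma hy hind (Set.Iio_disjoint_Ici le_rfl)) _ _
          (measurableSet_lt_cusumAlarmENat u) (measurableSet_crossesFrom u)
    _ ≤ _ := by
        rw [← ENNReal.tsum_mul_right]
        exact ENNReal.tsum_le_tsum fun u => by gcongr; exact hq u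

theorem inv_le_lintegral_cusumAlarm [IsProbabilityMeasure μ] (hy : ∀ i, Measurable (y i))
    (hind : iIndepFun y μ) (hh : 0 < h) {q : ℝ≥0∞}
    (hq : ∀ u, μ {ω | CrossesFrom c ε h (fun i => y i ω) u} ≤ q) :
    q⁻¹ ≤ ∫⁻ ω, cusumAlarm c ε h (fun i => y i ω) ∂μ := by
  have hmeas : ∀ u : ℕ, MeasurableSet {ω | (u : ℕ∞) < cusumAlarmENat c ε h fun i => y i ω} :=
    fun u => blockSigma_le hy _ _ (measurableSet_lt_cusumAlarmENat u)
  simp_rw [cusumAlarm_eq_toENNReal]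
  rw [lintegral_toENNReal_eq_tsum hmeas]
  exact inv_le_tsum_measure_lt hmeas (measure_cusumAlarmENat_ne_top_le hy hind hh hq)

theorem lintegral_cusumAlarmCount_le (hy : ∀ i, Measurable (y i)) (hh : 0 < h) {q : ℝ≥0∞}
    (hq : ∀ u, μ {ω | CrossesFrom c ε h (fun i => y i ω) u} ≤ q) (T : ℕ) :
    ∫⁻ ω, (cusumAlarmCount c ε h (fun i => y i ω) T : ℝ≥0∞) ∂μ ≤ T * q := by
  classical
  have hmeas : ∀ u, MeasurableSet {ω | CrossesFrom c ε h (fun i => y i ω) u} :=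
    fun u => blockSigma_le hy _ _ (measurableSet_crossesFrom u)
  calc ∫⁻ ω, (cusumAlarmCount c ε h (fun i => y i ω) T : ℝ≥0∞) ∂μ
      ≤ ∫⁻ ω, ∑ u ∈ range T, {ω | CrossesFrom c ε h (fun i => y i ω) u}.indicator 1 ω ∂μ := by
        refine lintegral_mono fun ω => ?_
        have := cusumAlarmCount_le_card_crossesFrom (c := c) (ε := ε) (x := fun i => y i ω) hh T
        simp only [Set.indicator_apply, Set.mem_ofPred_eq, Pi.one_apply, sum_boole]
        exact_mod_cast this
    _ = ∑ u ∈ range T, μ {ω | CrossesFrom c ε h (fun i => y i ω) u} := by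
        rw [lintegral_finsetSum _ fun u _ => measurable_one.indicator (hmeas u)]
        simp [lintegral_indicator_one (hmeas _)]
    _ ≤ T * q := by
        simpa using sum_le_sum fun u (_ : u ∈ range T) => hq u

end CusumProbability

theorem lintegral_ofReal_exp_eq_one_of_identDistrib {Ω : Type*} [MeasurableSpace Ω]
    {μ : Measure Ω} {Y Y₀ : Ω → ℝ} (hY : IdentDistrib Y Y₀ μ μ) {g : ℝ → ℝ} (hg : Measurable g)
    (h₀ : ∫ ω, exp (g (Y₀ ω)) ∂μ = 1) : ∫⁻ ω, ENNReal.ofReal (exp (g (Y ω))) ∂μ = 1 := by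
  have hint : Integrable (fun ω => exp (g (Y₀ ω))) μ := .of_integral_ne_zero (by simp [h₀])
  calc ∫⁻ ω, ENNReal.ofReal (exp (g (Y ω))) ∂μ = ∫⁻ ω, ENNReal.ofReal (exp (g (Y₀ ω))) ∂μ :=
        (hY.comp (ENNReal.measurable_ofReal.comp (measurable_exp.comp hg))).lintegral_eq
    _ = 1 := by
        rw [← ofReal_integral_eq_lintegral_ofReal hint (ae_of_all _ fun _ => (exp_pos _).le), h₀,
          ENNReal.ofReal_one]

theorem cusum_false_alarm_bound
    {Ω : Type*} [MeasurableSpace Ω] {μ : Measure Ω} [IsProbabilityMeasure μ]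
    (y : ℕ → Ω → ℝ) (hmeas : ∀ k, Measurable (y k))
    (hindep : iIndepFun y μ)
    (hident : ∀ k, IdentDistrib (y k) (y 0) μ μ)
    (c ε h : ℝ) (hh : 0 < h)
    (rm rp : ℝ) (hrm : 0 < rm) (hrp : 0 < rp)
    (hrootm : ∫ ω, Real.exp (rm * (c - y 0 ω - ε)) ∂μ = 1)
    (hrootp : ∫ ω, Real.exp (rp * (y 0 ω - c - ε)) ∂μ = 1)
    (r : ℝ) (hr : r = min rm rp) :
    ENNReal.ofReal (Real.exp (r * h) / 2) ≤
        ∫⁻ ω, cusumAlarm c ε h (fun k => y k ω) ∂μ ∧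
      ∀ T : ℕ,
        ∫⁻ ω, (cusumAlarmCount c ε h (fun k => y k ω) T : ℝ≥0∞) ∂μ ≤
          ENNReal.ofReal (2 * T / Real.exp (r * h)) := by
  have hexp : ∀ ρ, r ≤ ρ → ENNReal.ofReal (exp (-(ρ * h))) ≤ ENNReal.ofReal (exp (-(r * h))) :=
    fun ρ hρ => ENNReal.ofReal_le_ofReal (exp_le_exp.mpr (by nlinarith))
  have hcross : ∀ u, μ {ω | CrossesFrom c ε h (fun i => y i ω) u} ≤
      ENNReal.ofReal (2 * exp (-(r * h))) := fun u => calc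
    _ ≤ ENNReal.ofReal (exp (-(rp * h))) + ENNReal.ofReal (exp (-(rm * h))) :=
        measure_crossesFrom_le hmeas hindep hrp.le hrm.le
          (fun i => lintegral_ofReal_exp_eq_one_of_identDistrib (hident i)
            (g := fun t => rp * (t - c - ε)) (by fun_prop) hrootp)
          (fun i => lintegral_ofReal_exp_eq_one_of_identDistrib (hident i)
            (g := fun t => rm * (c - t - ε)) (by fun_prop) hrootm) u
    _ ≤ ENNReal.ofReal (exp (-(r * h))) + ENNReal.ofReal (exp (-(r * h))) :=
        add_le_add (hexp rp (hr ▸ min_le_right _ _)) (hexp rm (hr ▸ min_le_left _ _))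
    _ = ENNReal.ofReal (2 * exp (-(r * h))) := by
        rw [← ENNReal.ofReal_add (exp_pos _).le (exp_pos _).le, two_mul]
  refine ⟨?_, fun T => ?_⟩
  · calc ENNReal.ofReal (exp (r * h) / 2) = (ENNReal.ofReal (2 * exp (-(r * h))))⁻¹ := by
          rw [← ENNReal.ofReal_inv_of_pos (by positivity), exp_neg, mul_inv, inv_inv,
            div_eq_mul_inv, mul_comm]
      _ ≤ _ := inv_le_lintegral_cusumAlarm hmeas hindep hh hcross
  · calc _ ≤ T * ENNReal.ofReal (2 * exp (-(r * h))) :=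
          lintegral_cusumAlarmCount_le hmeas hh hcross T
      _ = ENNReal.ofReal (2 * T / exp (r * h)) := by
          rw [← ENNReal.ofReal_natCast, ← ENNReal.ofReal_mul (Nat.cast_nonneg T), exp_neg]
          ring_nf
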